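/- Let D = Σᵢ Aᵢ ∂_{Xᵢ} be a polynomial derivation. For generic (x₁,...,xₙ) ∈ ℂⁿ, let N_D be the Newton polytope of the Laurent polynomial Σᵢ xᵢ Aᵢ/Xᵢ. If f is a Darboux polynomial of D with cofactor g, then the Newton polytope of g is contained in N_D ∩ ℕⁿ. -/

import Mathlib

open MvPolynomial

/-- A multivariate polynomial viewed as a Laurent polynomial (element of the
add-monoid algebra over exponent vectors in ℤⁿ). -/
noncomputable def toLaurent' {n : ℕ} (f : MvPolynomial (Fin n) ℂ) :
    AddMonoidAlgebra ℂ (Fin n → ℤ) :=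
  f.support.sum fun m => AddMonoidAlgebra.single (fun i => (m i : ℤ)) (f.coeff m)

/-- The Laurent polynomial f / Xᵢ. -/
noncomputable def overX {n : ℕ} (i : Fin n) (f : MvPolynomial (Fin n) ℂ) :
    AddMonoidAlgebra ℂ (Fin n → ℤ) :=
  AddMonoidAlgebra.single (fun j => if j = i then (-1 : ℤ) else 0) (1 : ℂ) * toLaurent' f

/-- The Newton polytope of a multivariate Laurent polynomial. -/
noncomputable def NPL {n : ℕ} (f : AddMonoidAlgebra ℂ (Fin n → ℤ)) : Set (Fin n → ℝ) :=
  convexHull ℝ ((fun m i => ((m i : ℤ) : ℝ)) '' (f.coeff.support : Set (Fin n → ℤ)))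

/-- The Newton polytope of a multivariate polynomial. -/
noncomputable def NP {n : ℕ} (f : MvPolynomial (Fin n) ℂ) : Set (Fin n → ℝ) :=
  convexHull ℝ ((fun m i => ((m i : ℕ) : ℝ)) '' (f.support : Set (Fin n →₀ ℕ)))

/-!
Every exponent of `g * f = ∑ i, Aᵢ ∂ᵢ f` is `μ + m` with `m` an exponent of `f` and `μ` an exponent
of some `Aᵢ / Xᵢ`. If an exponent `a` of `g` lay outside the convex hull of these `μ`, some linear
functional `ℓ` would separate it from them. Since `ℂ[X]` is a domain, the `ℓ`-leading forms of `g`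
and `f` multiply to a nonzero form of `g * f`, so the largest value of `ℓ` on exponents of `g * f`
is the sum of those on `g` and `f`; but it is also `ℓ μ + ℓ m < ℓ a + max_f ℓ`, a contradiction.
For generic `x` no exponent `μ` cancels in `∑ i, xᵢ Aᵢ / Xᵢ`: the exceptional `x` are the zeros of
a product of nonzero linear forms, one for each `μ`.
-/

theorem Finsupp.weight_eq_apply_cast {σ F : Type*} [Fintype σ] [DecidableEq σ]
    [FunLike F (σ → ℝ) ℝ] [LinearMapClass F ℝ (σ → ℝ) ℝ] (ℓ : F) (m : σ →₀ ℕ) :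
    Finsupp.weight (fun i => ℓ (Pi.single i 1)) m = ℓ (fun i => (m i : ℝ)) := by
  conv_rhs => rw [← Finset.univ_sum_single (fun i => (m i : ℝ))]
  rw [map_sum, Finsupp.weight_apply, Finsupp.sum_fintype _ _ (by simp)]
  refine Finset.sum_congr rfl fun i _ => ?_
  rw [← mul_one (m i : ℝ), ← smul_eq_mul, Pi.single_smul', map_smul, smul_eq_mul, nsmul_eq_mul]

namespace MvPolynomial

section WeightedTotalDegree

variable {R M σ : Type*} [CommSemiring R] [AddCommMonoid M] [LinearOrder M]
  {w : σ → M} {p q : MvPolynomial σ R}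

lemma weight_le_weightedTotalDegree' {d : σ →₀ ℕ} (hd : d ∈ p.support) :
    (Finsupp.weight w d : WithBot M) ≤ weightedTotalDegree' w p :=
  Finset.le_sup (f := fun s => (Finsupp.weight w s : WithBot M)) hd

lemma exists_weightedTotalDegree'_eq (hp : p ≠ 0) :
    ∃ d ∈ p.support, weightedTotalDegree' w p = Finsupp.weight w d :=
  Finset.exists_mem_eq_sup _ (support_nonempty.2 hp) _

lemma coeff_eq_zero_of_weightedTotalDegree'_le_of_lt {d : σ →₀ ℕ} {a : M}
    (hp : weightedTotalDegree' w p ≤ a) (hd : a < Finsupp.weight w d) : coeff d p = 0 :=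
  notMem_support_iff.1 fun hmem =>
    (hd.trans_le (WithBot.coe_le_coe.1 ((weight_le_weightedTotalDegree' hmem).trans hp))).false

variable [IsOrderedCancelAddMonoid M]

theorem weightedHomogeneousComponent_mul_of_weightedTotalDegree'_le {a b : M}
    (hp : weightedTotalDegree' w p ≤ a) (hq : weightedTotalDegree' w q ≤ b) :
    weightedHomogeneousComponent w (a + b) (p * q) =
      weightedHomogeneousComponent w a p * weightedHomogeneousComponent w b q := by
  classical
  ext d
  rw [coeff_weightedHomogeneousComponent]
  split_ifs with hd
  · rw [coeff_mul, coeff_mul]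
    apply Finset.sum_congr rfl
    rintro ⟨x, y⟩ hxy
    rw [Finset.HasAntidiagonal.mem_antidiagonal] at hxy
    rw [← hxy, map_add] at hd
    simp only [coeff_weightedHomogeneousComponent]
    rcases trichotomy_of_add_eq_add hd.symm with h | h | h
    · rw [if_pos h.1.symm, if_pos h.2.symm]
    · rw [if_neg h.ne', coeff_eq_zero_of_weightedTotalDegree'_le_of_lt hp h, zero_mul, zero_mul]
    · rw [if_neg h.ne', coeff_eq_zero_of_weightedTotalDegree'_le_of_lt hq h, mul_zero, mul_zero]
  · exact (((weightedHomogeneousComponent_isWeightedHomogeneous a p).mul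
      (weightedHomogeneousComponent_isWeightedHomogeneous b q)).coeff_eq_zero d hd).symm

theorem weightedTotalDegree'_mul [NoZeroDivisors R] (hp : p ≠ 0) (hq : q ≠ 0) :
    weightedTotalDegree' w (p * q) = weightedTotalDegree' w p + weightedTotalDegree' w q := by
  classical
  obtain ⟨u, hu, hpu⟩ := exists_weightedTotalDegree'_eq (w := w) hp
  obtain ⟨v, hv, hqv⟩ := exists_weightedTotalDegree'_eq (w := w) hq
  rw [hpu, hqv, ← WithBot.coe_add]
  apply le_antisymm
  · refine Finset.sup_le fun d hd => ?_
    obtain ⟨x, hx, y, hy, rfl⟩ := Finset.mem_add.1 (support_mul p q hd)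
    rw [map_add, WithBot.coe_add]
    exact add_le_add (hpu ▸ weight_le_weightedTotalDegree' hx)
      (hqv ▸ weight_le_weightedTotalDegree' hy)
  · have component_ne_zero {r : MvPolynomial σ R} {d : σ →₀ ℕ} (hd : d ∈ r.support) :
        weightedHomogeneousComponent w (Finsupp.weight w d) r ≠ 0 := fun h => by
      have := congrArg (coeff d) h
      rw [coeff_weightedHomogeneousComponent, if_pos rfl, coeff_zero] at this
      exact mem_support_iff.1 hd this
    obtain ⟨d, hd⟩ := ne_zero_iff.1 <|
      weightedHomogeneousComponent_mul_of_weightedTotalDegree'_le hpu.le hqv.le ▸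
        mul_ne_zero (component_ne_zero hu) (component_ne_zero hv)
    rw [coeff_weightedHomogeneousComponent] at hd
    split_ifs at hd with hdw
    · exact hdw ▸ weight_le_weightedTotalDegree' (mem_support_iff.2 hd)
    · exact absurd rfl hd

end WeightedTotalDegree

variable {σ R : Type*} [CommSemiring R]

def exponents (p : MvPolynomial σ R) : Set (σ → ℝ) :=
  (fun (m : σ →₀ ℕ) i => (m i : ℝ)) '' p.support

open Pointwise in
theorem convexHull_exponents_subset_of_exponents_mul_subset [Fintype σ] [NoZeroDivisors R]
    {f g : MvPolynomial σ R} {T : Set (σ → ℝ)} (hT : T.Finite) (hf : f ≠ 0)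
    (hgf : exponents (g * f) ⊆ T + exponents f) :
    convexHull ℝ (exponents g) ⊆ convexHull ℝ T := by
  classical
  refine convexHull_min ?_ (convex_convexHull ℝ T)
  rintro _ ⟨a, ha, rfl⟩
  by_contra ha_notMem
  obtain ⟨ℓ, c, hℓT, hℓa⟩ := geometric_hahn_banach_closed_point (convex_convexHull ℝ T)
    (hT.isClosed_convexHull ℝ) ha_notMem
  obtain ⟨w, hw⟩ : ∃ w : σ → ℝ, ∀ m : σ →₀ ℕ, Finsupp.weight w m = ℓ (fun i => (m i : ℝ)) :=
    ⟨_, Finsupp.weight_eq_apply_cast ℓ⟩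
  have hg : g ≠ 0 := ne_zero_iff.2 ⟨a, mem_support_iff.1 ha⟩
  obtain ⟨u, -, hgu⟩ := exists_weightedTotalDegree'_eq (w := w) hg
  obtain ⟨v, -, hfv⟩ := exists_weightedTotalDegree'_eq (w := w) hf
  obtain ⟨d, hd, hgfd⟩ := exists_weightedTotalDegree'_eq (w := w) (mul_ne_zero hg hf)
  have hd_eq : Finsupp.weight w d = Finsupp.weight w u + Finsupp.weight w v := by
    rw [← WithBot.coe_inj, WithBot.coe_add, ← hgu, ← hfv, ← hgfd, weightedTotalDegree'_mul hg hf]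
  obtain ⟨t, ht, _, ⟨m, hm, rfl⟩, htm⟩ := hgf ⟨d, hd, rfl⟩
  have hd_split : Finsupp.weight w d = ℓ t + Finsupp.weight w m := by
    rw [hw, hw, ← map_add]
    exact congrArg ℓ htm.symm
  have hm_le : Finsupp.weight w m ≤ Finsupp.weight w v :=
    WithBot.coe_le_coe.1 (hfv ▸ weight_le_weightedTotalDegree' hm)
  have ha_le : Finsupp.weight w a ≤ Finsupp.weight w u :=
    WithBot.coe_le_coe.1 (hgu ▸ weight_le_weightedTotalDegree' ha)
  have ht_lt := hℓT t (subset_convexHull ℝ T ht)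
  rw [hw] at ha_le
  linarith

theorem exists_add_single_eq_of_mem_support_sum_mul_pderiv (A : σ → MvPolynomial σ R)
    (s : Finset σ) {f : MvPolynomial σ R} {p : σ →₀ ℕ}
    (hp : p ∈ (∑ i ∈ s, A i * pderiv i f).support) :
    ∃ i ∈ s, ∃ a ∈ (A i).support, ∃ m ∈ f.support, p + Finsupp.single i 1 = a + m := by
  classical
  obtain ⟨i, hi, hpi⟩ := Finset.mem_biUnion.1 (support_sum hp)
  obtain ⟨a, ha, m, hm, rfl⟩ := Finset.mem_add.1 (support_mul _ _ hpi)
  refine ⟨i, hi, a, ha, m + Finsupp.single i 1, ?_, add_assoc _ _ _⟩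
  rw [mem_support_iff, coeff_pderiv] at hm
  exact mem_support_iff.2 (left_ne_zero_of_mul hm)

theorem exists_ne_zero_forall_eval_ne_zero_imp_sum_mul_ne_zero [Fintype σ] [DecidableEq σ]
    [NoZeroDivisors R] [Nontrivial R] {ι : Type*} (s : Finset ι) (c : ι → σ → R)
    (hc : ∀ μ ∈ s, c μ ≠ 0) :
    ∃ P : MvPolynomial σ R, P ≠ 0 ∧ ∀ x, eval x P ≠ 0 → ∀ μ ∈ s, ∑ i, c μ i * x i ≠ 0 := by
  refine ⟨∏ μ ∈ s, ∑ i, C (c μ i) * X i, Finset.prod_ne_zero_iff.2 fun μ hμ h => hc μ hμ ?_,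
    fun x hx μ hμ => ?_⟩
  · funext j
    simpa [Pi.single_apply] using congrArg (eval (Pi.single j 1)) h
  · rw [map_prod] at hx
    simpa using Finset.prod_ne_zero_iff.1 hx μ hμ

end MvPolynomial

lemma coeff_toLaurent' {n : ℕ} (f : MvPolynomial (Fin n) ℂ) (m : Fin n →₀ ℕ) :
    (toLaurent' f).coeff (fun i => (m i : ℤ)) = coeff m f := by
  classical
  have hinj (m' : Fin n →₀ ℕ) : ((fun i => (m' i : ℤ)) = fun i => (m i : ℤ)) ↔ m' = m :=
    ⟨fun h => Finsupp.ext fun i => by exact_mod_cast congrFun h i, by rintro rfl; rfl⟩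
  rw [toLaurent', AddMonoidAlgebra.coeff_sum, Finset.sum_apply']
  simp only [AddMonoidAlgebra.coeff_single, Finsupp.single_apply, hinj, Finset.sum_ite_eq']
  exact ite_eq_left_iff.2 fun h => (notMem_support_iff.1 h).symm

lemma coeff_overX {n : ℕ} (i : Fin n) (f : MvPolynomial (Fin n) ℂ) (m : Fin n →₀ ℕ) :
    (overX i f).coeff ((fun j => if j = i then -1 else 0) + fun j => (m j : ℤ)) = coeff m f := by
  rw [overX, AddMonoidAlgebra.coeff_single_mul_add, one_mul, coeff_toLaurent']

open Pointwise in
theorem exponents_sum_mul_pderiv_subset {n : ℕ} (A : Fin n → MvPolynomial (Fin n) ℂ)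
    (f : MvPolynomial (Fin n) ℂ) :
    exponents (∑ i, A i * pderiv i f) ⊆
      (fun (μ : Fin n → ℤ) i => (μ i : ℝ)) ''
          ↑(Finset.univ.biUnion fun i => (overX i (A i)).coeff.support) + exponents f := by
  rintro _ ⟨p, hp, rfl⟩
  obtain ⟨i, -, a, ha, m, hm, hpam⟩ := exists_add_single_eq_of_mem_support_sum_mul_pderiv A _ hp
  refine ⟨_, ⟨(fun j => if j = i then -1 else 0) + fun j => (a j : ℤ),
    Finset.mem_biUnion.2 ⟨i, Finset.mem_univ i, Finsupp.mem_support_iff.2 ?_⟩, rfl⟩,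
    _, ⟨m, hm, rfl⟩, ?_⟩
  · rw [coeff_overX]
    exact mem_support_iff.1 ha
  · funext j
    have hj := congrArg (fun d => (d j : ℝ)) hpam
    simp only [Finsupp.coe_add, Pi.add_apply, Nat.cast_add, Finsupp.single_apply, eq_comm (a := i)]
      at hj ⊢
    split_ifs at hj ⊢ <;> push_cast at hj ⊢ <;> linarith

/-- for generic (x₁,…,xₙ) (outside the zero set of some nonzero
polynomial P), the Newton polytope of the cofactor g of any Darboux polynomial f of
D = Σᵢ Aᵢ∂_{Xᵢ} is contained in N_D ∩ ℕⁿ, where N_D = N(Σᵢ xᵢ Aᵢ/Xᵢ). -/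
theorem cofactor_newtonPolytope_subset {n : ℕ} (A : Fin n → MvPolynomial (Fin n) ℂ) :
    ∃ P : MvPolynomial (Fin n) ℂ, P ≠ 0 ∧
      ∀ x : Fin n → ℂ, eval x P ≠ 0 →
        ∀ f g : MvPolynomial (Fin n) ℂ, f ≠ 0 → (∑ i, A i * pderiv i f) = g * f →
          NP g ⊆ NPL (∑ i, x i • overX i (A i)) ∩ {m : Fin n → ℝ | ∀ i, 0 ≤ m i} := by
  set S := Finset.univ.biUnion fun i => (overX i (A i)).coeff.support
  obtain ⟨P, hP, hPx⟩ := exists_ne_zero_forall_eval_ne_zero_imp_sum_mul_ne_zero S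
    (fun μ i => (overX i (A i)).coeff μ) fun μ hμ h => by
      obtain ⟨i, -, hi⟩ := Finset.mem_biUnion.1 hμ
      exact Finsupp.mem_support_iff.1 hi (congrFun h i)
  refine ⟨P, hP, fun x hx f g hf hfg => Set.subset_inter ?_ ?_⟩
  · have hS : S ⊆ (∑ i, x i • overX i (A i)).coeff.support := fun μ hμ => by
      rw [Finsupp.mem_support_iff, AddMonoidAlgebra.coeff_sum, Finset.sum_apply']
      simpa [mul_comm] using hPx x hx μ hμ
    calc NP g ⊆ convexHull ℝ ((fun (μ : Fin n → ℤ) i => (μ i : ℝ)) '' S) :=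
          convexHull_exponents_subset_of_exponents_mul_subset (S.finite_toSet.image _) hf
            (hfg ▸ exponents_sum_mul_pderiv_subset A f)
      _ ⊆ NPL (∑ i, x i • overX i (A i)) := convexHull_mono (Set.image_mono hS)
  · exact convexHull_min (by rintro _ ⟨m, -, rfl⟩ i; positivity) (convex_Ici 0)
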